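/- arXiv:1403.5654 — 2 statements merged into one kernel-verified Lean document; each statement's English description precedes it below -/
import Mathlib

section
/- For every constant C > 0 and every integer N ≥ 1 there exists a constant C₀ > 0 such that for all λ ∈ ℝ, ∏_{j=1}^∞ (1 + C e^{C|λ|^N − √j / C}) ≤ C₀ e^{C₀ |λ|^{3N}}. -/
/-!
Take logarithms, so the product becomes `∑ log (1 + C e^{Cx - √j/C})` with `x = |λ|^N`. Once
`√j ≥ 2C²x` the exponent is at most `-√j/(2C)`, and `log (1 + a) ≤ a` bounds that tail by the
constant `C ∑ e^{-√j/(2C)}`. Each of the remaining `O(x²)` terms is at most `log (1 + C) + Cx`,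
so the logarithm of the product is `O((1 + x)³)`.
-/

open Real

lemma summable_exp_neg_sqrt_div {c : ℝ} (hc : 0 < c) :
    Summable fun j : ℕ => exp (-√(j + 1) / c) := by
  have hp : Summable fun j : ℕ => 24 * c ^ 4 * (1 / ((j : ℝ) + 1) ^ 2) := by
    refine Summable.mul_left _ ?_
    exact_mod_cast (summable_nat_add_iff 1).mpr (summable_one_div_nat_pow.mpr one_lt_two)
  refine hp.of_nonneg_of_le (fun _ => (exp_pos _).le) fun j => ?_
  have hj : (0 : ℝ) < j + 1 := by positivity
  have h := pow_div_factorial_le_exp _ (div_nonneg (sqrt_nonneg ((j : ℝ) + 1)) hc.le) 4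
  rw [div_pow, show √((j : ℝ) + 1) ^ 4 = ((j : ℝ) + 1) ^ 2 by
    rw [show 4 = 2 * 2 by rfl, pow_mul, sq_sqrt hj.le]] at h
  rw [neg_div, exp_neg, one_div, ← div_eq_mul_inv, inv_le_comm₀ (exp_pos _) (by positivity)]
  simpa [Nat.factorial, div_div, mul_comm] using h

lemma log_one_add_mul_exp_le {C v w : ℝ} (hC : 0 ≤ C) (hvw : v ≤ w) (hw : 0 ≤ w) :
    log (1 + C * exp v) ≤ log (1 + C) + w := by
  rw [← log_exp w, ← log_mul (by positivity) (exp_pos w).ne']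
  refine log_le_log (by positivity) ?_
  have := exp_le_exp.mpr hvw
  have := one_le_exp hw
  nlinarith

lemma mul_sub_sqrt_div_le {C x : ℝ} (hC : 0 < C) {j M : ℕ} (hM : (2 * C ^ 2 * x) ^ 2 ≤ M) :
    C * x - √(↑(j + M) + 1) / C ≤ -√(j + 1) / (2 * C) := by
  have hj : √((j : ℝ) + 1) ≤ √(↑(j + M) + 1) :=
    sqrt_le_sqrt (by push_cast; linarith [M.cast_nonneg (α := ℝ)])
  have hM' : √(M : ℝ) ≤ √(↑(j + M) + 1) :=
    sqrt_le_sqrt (by push_cast; linarith [j.cast_nonneg (α := ℝ)])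
  have hx := (le_abs_self _).trans (abs_le_sqrt hM)
  calc C * x - √(↑(j + M) + 1) / C = (2 * C ^ 2 * x - 2 * √(↑(j + M) + 1)) / (2 * C) := by
        field_simp
    _ ≤ -√(j + 1) / (2 * C) := by gcongr; linarith

lemma tprod_one_add_le_exp {a b : ℕ → ℝ} (ha : ∀ j, 0 ≤ a j) {M : ℕ} {B : ℝ}
    (hB : ∀ j < M, log (1 + a j) ≤ B) (hb : Summable b) (hab : ∀ j, a (j + M) ≤ b j) :
    ∏' j, (1 + a j) ≤ exp (M * B + ∑' j, b j) := by
  have hpos : ∀ j, 0 < 1 + a j := fun j => by linarith [ha j]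
  have ha_tail : Summable fun j => a (j + M) := hb.of_nonneg_of_le (fun j => ha _) hab
  have hlog := summable_log_one_add_of_summable ((summable_nat_add_iff M).mp ha_tail)
  rw [← rexp_tsum_eq_tprod hpos hlog, ← hlog.sum_add_tsum_nat_add M]
  refine exp_le_exp.mpr (add_le_add ?_ ?_)
  · simpa using Finset.sum_le_card_nsmul _ _ _ fun j hj => hB j (Finset.mem_range.mp hj)
  · refine ((summable_nat_add_iff M).mpr hlog).tsum_le_tsum (fun j => ?_) hb
    linarith [log_le_sub_one_of_pos (hpos (j + M)), hab j]

lemma exists_tprod_one_add_mul_exp_sub_sqrt_le {C : ℝ} (hC : 0 < C) :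
    ∃ K, 0 ≤ K ∧ ∀ x, 0 ≤ x →
      ∏' j : ℕ, (1 + C * exp (C * x - √(j + 1) / C)) ≤ exp (K * (1 + x) ^ 3) := by
  set S := ∑' j : ℕ, exp (-√(j + 1) / (2 * C))
  have hS : Summable fun j : ℕ => exp (-√(j + 1) / (2 * C)) :=
    summable_exp_neg_sqrt_div (by positivity)
  have hlog : 0 ≤ log (1 + C) := log_nonneg (by linarith)
  refine ⟨(2 * C ^ 2 + 1) ^ 2 * (log (1 + C) + C) + C * S, by positivity, fun x hx => ?_⟩
  set M := ⌈(2 * C ^ 2 * x) ^ 2⌉₊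
  have hM : (2 * C ^ 2 * x) ^ 2 ≤ M := Nat.le_ceil _
  have hM_le : (M : ℝ) ≤ (2 * C ^ 2 + 1) ^ 2 * (1 + x) ^ 2 := by
    have h : 2 * C ^ 2 * x + 1 ≤ (2 * C ^ 2 + 1) * (1 + x) := by nlinarith
    refine (Nat.ceil_lt_add_one (by positivity)).le.trans ?_
    nlinarith [pow_le_pow_left₀ (by positivity) h 2]
  have hhead : ∀ j : ℕ, log (1 + C * exp (C * x - √(j + 1) / C)) ≤ log (1 + C) + C * x :=
    fun j => log_one_add_mul_exp_le hC.le
      (by linarith [div_nonneg (sqrt_nonneg ((j : ℝ) + 1)) hC.le]) (by positivity)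
  refine (tprod_one_add_le_exp (M := M) (b := fun j => C * exp (-√(j + 1) / (2 * C)))
    (fun j => by positivity) (fun j _ => hhead j) (hS.mul_left C)
    (fun j => by gcongr; exact mul_sub_sqrt_div_le hC hM)).trans ?_
  rw [tsum_mul_left]
  have hB : log (1 + C) + C * x ≤ (log (1 + C) + C) * (1 + x) := by nlinarith
  have hcube : 1 ≤ (1 + x) ^ 3 := one_le_pow₀ (by linarith)
  gcongr
  calc (M : ℝ) * (log (1 + C) + C * x) + C * S
      ≤ (2 * C ^ 2 + 1) ^ 2 * (1 + x) ^ 2 * ((log (1 + C) + C) * (1 + x))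
          + C * S * (1 + x) ^ 3 :=
        add_le_add (mul_le_mul hM_le hB (by positivity) (by positivity))
          (le_mul_of_one_le_right (by positivity) hcube)
    _ = _ := by ring

theorem infinite_product_estimate_general (C : ℝ) (hC : 0 < C) (N : ℕ) :
    ∃ C₀ : ℝ, 0 < C₀ ∧ ∀ l : ℝ,
      (∏' j : ℕ, (1 + C * Real.exp (C * |l| ^ N - Real.sqrt (j + 1) / C)))
        ≤ C₀ * Real.exp (C₀ * |l| ^ (3 * N)) := by
  obtain ⟨K, hK, hprod⟩ := exists_tprod_one_add_mul_exp_sub_sqrt_le hC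
  refine ⟨exp (4 * K), exp_pos _, fun l => ?_⟩
  have hx : 0 ≤ |l| ^ N := by positivity
  have hcube : (1 + |l| ^ N) ^ 3 ≤ 4 * (1 + |l| ^ (3 * N)) := by
    simpa [pow_mul', show (2 : ℝ) ^ 2 = 4 by norm_num] using add_pow_le zero_le_one hx 3
  calc _ ≤ exp (K * (1 + |l| ^ N) ^ 3) := hprod _ hx
    _ ≤ exp (4 * K + 4 * K * |l| ^ (3 * N)) := by gcongr; nlinarith
    _ ≤ exp (4 * K) * exp (exp (4 * K) * |l| ^ (3 * N)) := by
        rw [exp_add]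
        gcongr
        linarith [add_one_le_exp (4 * K)]

/-- For every `C > 0` and integer `N ≥ 1` there is `C₀ > 0` such that for all
real `λ`, `∏_{j=1}^∞ (1 + C e^{C|λ|^N − √j / C}) ≤ C₀ e^{C₀ |λ|^{3N}}`.
(The product over `j ≥ 1` is written as a product over `j : ℕ` of the factor at `j + 1`.) -/
theorem infinite_product_estimate (C : ℝ) (hC : 0 < C) (N : ℕ) (hN : 1 ≤ N) :
    ∃ C₀ : ℝ, 0 < C₀ ∧ ∀ l : ℝ,
      (∏' j : ℕ, (1 + C * Real.exp (C * |l| ^ N - Real.sqrt (j + 1) / C)))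
        ≤ C₀ * Real.exp (C₀ * |l| ^ (3 * N)) :=
  infinite_product_estimate_general C hC N
end

section
/- For every C > 0 there is a constant C₁ such that for all λ ∈ ℝ, ∫_0^∞ log(1 + C e^{C|λ|^N − √x / C}) dx ≤ C₁ (1 + |λ|^{3N}). -/
open Real MeasureTheory Set

/-!
Write `a = C |λ|^N`. The integrand is at most `log (1 + C) + a` everywhere, and once
`√x ≥ b := C (a + 1)` the exponent satisfies `√x / C - a ≥ √x / b`, so by `log (1 + u) ≤ u`
and `e^{-s} ≤ 3! / s³` it is at most `6 C b³ x^{-3/2}`. Splitting the integral at `x = b²` gives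
`(log (1 + C) + a) b² + 12 C b²`, which is cubic in `a`, hence `O(1 + |λ|^{3N})`.
-/

lemma Real.exp_neg_le_factorial_div_pow {s : ℝ} (hs : 0 < s) (n : ℕ) :
    exp (-s) ≤ n.factorial / s ^ n := by
  rw [exp_neg, inv_le_comm₀ (exp_pos s) (by positivity), inv_div]
  exact pow_div_factorial_le_exp _ hs.le n

lemma add_one_pow_three_le {m : ℝ} (hm : 0 ≤ m) : (m + 1) ^ 3 ≤ 4 * (1 + m ^ 3) := by
  nlinarith [mul_nonneg (sq_nonneg (m - 1)) (by linarith : 0 ≤ m + 1)]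

lemma setIntegral_Ioi_le_of_le_of_norm_le_rpow {f : ℝ → ℝ} (hf : Continuous f)
    {x₀ M K p : ℝ} (hx₀ : 0 < x₀) (hp : p < -1)
    (h_le : ∀ x ∈ Ioc 0 x₀, f x ≤ M) (h_tail : ∀ x ∈ Ioi x₀, ‖f x‖ ≤ K * x ^ p) :
    ∫ x in Ioi 0, f x ≤ M * x₀ + K * (-x₀ ^ (p + 1) / (p + 1)) := by
  have hmaj : IntegrableOn (fun x ↦ K * x ^ p) (Ioi x₀) :=
    (integrableOn_Ioi_rpow_of_lt hp hx₀).const_mul K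
  have hI₁ : IntegrableOn f (Ioc 0 x₀) := hf.integrableOn_Ioc
  have hI₂ : IntegrableOn f (Ioi x₀) := hmaj.mono' hf.aestronglyMeasurable.restrict
    ((ae_restrict_iff' measurableSet_Ioi).2 (Filter.Eventually.of_forall h_tail))
  have h₁ : ∫ x in Ioc 0 x₀, f x ≤ M * x₀ := by
    calc ∫ x in Ioc 0 x₀, f x ≤ ∫ _ in Ioc 0 x₀, M :=
          setIntegral_mono_on hI₁ (integrableOn_const measure_Ioc_lt_top.ne)
            measurableSet_Ioc h_le
      _ = M * x₀ := by simp [hx₀.le, mul_comm]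
  have h₂ : ∫ x in Ioi x₀, f x ≤ K * (-x₀ ^ (p + 1) / (p + 1)) := by
    calc ∫ x in Ioi x₀, f x ≤ ∫ x in Ioi x₀, K * x ^ p :=
          setIntegral_mono_on hI₂ hmaj measurableSet_Ioi
            fun x hx ↦ (le_norm_self _).trans (h_tail x hx)
      _ = K * (-x₀ ^ (p + 1) / (p + 1)) := by
        rw [integral_const_mul, integral_Ioi_rpow_of_lt hp hx₀]
  rw [← Ioc_union_Ioi_eq_Ioi hx₀.le,
    setIntegral_union Ioc_disjoint_Ioi_same measurableSet_Ioi hI₁ hI₂]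
  linarith

lemma log_one_add_mul_exp_sub_le {C a s : ℝ} (hC : 0 ≤ C) (ha : 0 ≤ a) (hs : 0 ≤ s) :
    log (1 + C * exp (a - s)) ≤ log (1 + C) + a := by
  have h₁ : exp (a - s) ≤ exp a := exp_le_exp.2 (by linarith)
  have h₂ : 1 ≤ exp a := one_le_exp ha
  calc log (1 + C * exp (a - s)) ≤ log ((1 + C) * exp a) :=
        log_le_log (by positivity) (by nlinarith)
    _ = log (1 + C) + a := by rw [log_mul (by positivity) (exp_pos a).ne', log_exp]

lemma log_one_add_mul_exp_sub_div_le {C a t : ℝ} (hC : 0 < C) (ha : 0 ≤ a)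
    (ht : C * (a + 1) ≤ t) :
    log (1 + C * exp (a - t / C)) ≤ 6 * C * (C * (a + 1)) ^ 3 / t ^ 3 := by
  have hb : 0 < C * (a + 1) := by positivity
  have ht₀ : 0 < t := hb.trans_le ht
  have hs₀ : 0 < t / (C * (a + 1)) := by positivity
  have hs : t / (C * (a + 1)) ≤ t / C - a := by
    rw [div_le_iff₀ hb, sub_mul, div_mul_eq_mul_div, mul_div_assoc, mul_div_cancel_left₀ _ hC.ne']
    nlinarith
  calc log (1 + C * exp (a - t / C)) ≤ C * exp (a - t / C) := by
        linarith [log_le_sub_one_of_pos (by positivity : 0 < 1 + C * exp (a - t / C))]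
    _ ≤ C * exp (-(t / (C * (a + 1)))) := by gcongr; linarith
    _ ≤ C * ((3).factorial / (t / (C * (a + 1))) ^ 3) := by
        gcongr; exact exp_neg_le_factorial_div_pow hs₀ 3
    _ = 6 * C * (C * (a + 1)) ^ 3 / t ^ 3 := by
        simp only [Nat.factorial, div_pow]; field_simp; norm_num

lemma integral_log_one_add_mul_exp_sub_sqrt_le {C a : ℝ} (hC : 0 < C) (ha : 0 ≤ a) :
    ∫ x in Ioi 0, log (1 + C * exp (a - √x / C))
      ≤ C ^ 2 * (log (1 + C) + 12 * C + 1) * (a + 1) ^ 3 := by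
  set b := C * (a + 1)
  have hb : 0 < b := by positivity
  have hcont : Continuous fun x ↦ log (1 + C * exp (a - √x / C)) :=
    Continuous.log (by fun_prop) fun x ↦ (by positivity : 0 < 1 + C * exp (a - √x / C)).ne'
  have h_tail : ∀ x ∈ Ioi (b ^ 2),
      ‖log (1 + C * exp (a - √x / C))‖ ≤ 6 * C * b ^ 3 * x ^ (-(3 / 2) : ℝ) := by
    intro x hx
    have hx₀ : 0 < x := (pow_pos hb 2).trans hx
    have hbx : b ≤ √x := (lt_sqrt hb.le).2 hx |>.le
    rw [norm_of_nonneg (log_nonneg (by nlinarith [exp_pos (a - √x / C)])),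
      rpow_neg hx₀.le, show (3 / 2 : ℝ) = 1 / 2 * 3 by norm_num, rpow_mul hx₀.le,
      ← sqrt_eq_rpow, rpow_ofNat, ← div_eq_mul_inv]
    exact log_one_add_mul_exp_sub_div_le hC ha hbx
  calc ∫ x in Ioi 0, log (1 + C * exp (a - √x / C))
      ≤ (log (1 + C) + a) * b ^ 2
        + 6 * C * b ^ 3 * (-(b ^ 2) ^ (-(3 / 2 : ℝ) + 1) / (-(3 / 2 : ℝ) + 1)) :=
        setIntegral_Ioi_le_of_le_of_norm_le_rpow hcont (by positivity) (by norm_num)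
          (fun x _ ↦ log_one_add_mul_exp_sub_le hC.le ha (by positivity)) h_tail
    _ = C ^ 2 * (a + 1) ^ 2 * (log (1 + C) + a + 12 * C) := by
        rw [show (-(3 / 2 : ℝ) + 1) = -(1 / 2) by norm_num, rpow_neg (sq_nonneg b),
          ← sqrt_eq_rpow, sqrt_sq hb.le]
        field_simp
        ring
    _ ≤ C ^ 2 * (a + 1) ^ 2 * ((log (1 + C) + 12 * C + 1) * (a + 1)) := by
        have : 0 ≤ log (1 + C) + 12 * C := by linarith [log_nonneg (by linarith : (1 : ℝ) ≤ 1 + C)]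
        gcongr
        nlinarith
    _ = C ^ 2 * (log (1 + C) + 12 * C + 1) * (a + 1) ^ 3 := by ring

theorem integral_log_estimate_general (N : ℕ) (C : ℝ) (hC : 0 < C) :
    ∃ C₁ : ℝ, ∀ l : ℝ,
      (∫ x in Set.Ioi (0 : ℝ),
          Real.log (1 + C * Real.exp (C * |l| ^ N - Real.sqrt x / C)))
        ≤ C₁ * (1 + |l| ^ (3 * N)) := by
  set K := C ^ 2 * (log (1 + C) + 12 * C + 1)
  have hK : 0 ≤ K := by
    have := log_nonneg (by linarith : (1 : ℝ) ≤ 1 + C)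
    positivity
  refine ⟨4 * (C + 1) ^ 3 * K, fun l ↦ ?_⟩
  set m := |l| ^ N
  have hm : 0 ≤ m := by positivity
  calc _ ≤ K * (C * m + 1) ^ 3 := integral_log_one_add_mul_exp_sub_sqrt_le hC (by positivity)
    _ ≤ K * ((C + 1) ^ 3 * (4 * (1 + m ^ 3))) := by
        gcongr
        calc (C * m + 1) ^ 3 ≤ ((C + 1) * (m + 1)) ^ 3 := by gcongr; nlinarith
          _ = (C + 1) ^ 3 * (m + 1) ^ 3 := mul_pow _ _ _
          _ ≤ (C + 1) ^ 3 * (4 * (1 + m ^ 3)) := by gcongr; exact add_one_pow_three_le hm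
    _ = 4 * (C + 1) ^ 3 * K * (1 + |l| ^ (3 * N)) := by
        rw [mul_comm 3 N, pow_mul]
        ring

/-- For a fixed integer `N ≥ 1` and every `C > 0` there is a constant `C₁`
such that for all real `λ`,
`∫_0^∞ log(1 + C e^{C|λ|^N − √x / C}) dx ≤ C₁ (1 + |λ|^{3N})`. -/
theorem integral_log_estimate (N : ℕ) (hN : 1 ≤ N) (C : ℝ) (hC : 0 < C) :
    ∃ C₁ : ℝ, ∀ l : ℝ,
      (∫ x in Set.Ioi (0 : ℝ),
          Real.log (1 + C * Real.exp (C * |l| ^ N - Real.sqrt x / C)))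
        ≤ C₁ * (1 + |l| ^ (3 * N)) :=
  integral_log_estimate_general N C hC
end
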